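/- Consider N ≥ 2 buyers with valuations v₁ > v₂ > ... > v_N and arbitrary bids b₁,...,b_N. Let v⁻ and b⁻ denote the second-highest valuation and second-highest bid respectively, let q_i ∈ {0,1} indicate whether buyer i has the (strictly) highest bid, and let s_i = (v_i - b_i)₊ be the shading amount of buyer i. Then (v⁻ - b⁻)₊ ≤ max_{i ∈ [N]} s_i (1 - q_i). -/

import Mathlib

/-- All of `Fin N` is a nonempty finset when `2 ≤ N`. -/
def finUnivNonempty {N : ℕ} (hN : 2 ≤ N) : (Finset.univ : Finset (Fin N)).Nonempty :=
  ⟨⟨0, by omega⟩, Finset.mem_univ _⟩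

/-- Removing one element from `Fin N` leaves a nonempty finset when `2 ≤ N`. -/
def finEraseNonempty {N : ℕ} (hN : 2 ≤ N) (i : Fin N) :
    (Finset.univ.erase i).Nonempty := by
  rw [← Finset.card_pos, Finset.card_erase_of_mem (Finset.mem_univ i),
    Finset.card_univ, Fintype.card_fin]
  omega

/-- The second-highest value of `x : Fin N → ℝ` (for `2 ≤ N`):
`max_i min(x i, max_{j ≠ i} x j)`. -/
noncomputable def secondMax {N : ℕ} (hN : 2 ≤ N) (x : Fin N → ℝ) : ℝ :=
  Finset.univ.sup' (finUnivNonempty hN) fun i =>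
    min (x i) ((Finset.univ.erase i).sup' (finEraseNonempty hN i) x)

/-! Let `i` hold the highest bid and pick a buyer `k ≠ i` among the two highest valuations.
Then `v⁻ ≤ v₂ ≤ v_k`, `b_k ≤ b⁻`, and `q_k = 0` because `b_k ≤ b_i`; so `v⁻ - b⁻ ≤ v_k - b_k ≤ s_k = s_k (1 - q_k)`. -/

section SecondMax

variable {N : ℕ} (hN : 2 ≤ N)

theorem secondMax_le_iff (x : Fin N → ℝ) (c : ℝ) :
    secondMax hN x ≤ c ↔ ∀ i j, j ≠ i → min (x i) (x j) ≤ c := by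
  simp only [secondMax, Finset.sup'_le_iff, Finset.mem_univ, true_implies, min_le_iff,
    Finset.mem_erase, and_true, ← forall_or_left]

theorem min_le_secondMax (x : Fin N → ℝ) {i j : Fin N} (hji : j ≠ i) :
    min (x i) (x j) ≤ secondMax hN x :=
  (secondMax_le_iff hN x _).mp le_rfl i j hji

theorem secondMax_le_of_antitone {x : Fin N → ℝ} (hx : Antitone x) :
    secondMax hN x ≤ x ⟨1, by omega⟩ := by
  refine (secondMax_le_iff hN x _).mpr fun i j hji => ?_
  rcases Nat.eq_zero_or_pos i with hi | hi
  · exact (min_le_right _ _).trans (hx (Fin.mk_le_of_le_val (by omega)))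
  · exact (min_le_left _ _).trans (hx (Fin.mk_le_of_le_val hi))

end SecondMax

theorem Fin.exists_ne_val_le_one {N : ℕ} (hN : 2 ≤ N) (i : Fin N) :
    ∃ k : Fin N, k ≠ i ∧ (k : ℕ) ≤ 1 := by
  by_cases hi : (i : ℕ) = 0
  · exact ⟨⟨1, by omega⟩, fun h => by simp [← h] at hi, le_rfl⟩
  · exact ⟨⟨0, by omega⟩, fun h => hi (by simp [← h]), zero_le_one⟩

open Classical in
theorem second_highest_drop_le_max_shading_general
    {N : ℕ} (hN : 2 ≤ N) (v b q s : Fin N → ℝ)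
    (hv : StrictAnti v)
    (hq : ∀ i, q i = if (∀ j, j ≠ i → b j < b i) then 1 else 0)
    (hs : ∀ i, s i = max (v i - b i) 0) :
    max (secondMax hN v - secondMax hN b) 0 ≤
      Finset.univ.sup' (finUnivNonempty hN) (fun i => s i * (1 - q i)) := by
  obtain ⟨top, -, htop⟩ := Finset.exists_max_image Finset.univ b (finUnivNonempty hN)
  obtain ⟨k, hk, hk1⟩ := Fin.exists_ne_val_le_one hN top
  have hvk : secondMax hN v ≤ v k :=
    (secondMax_le_of_antitone hN hv.antitone).trans (hv.antitone (Fin.le_def.mpr hk1))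
  have hbk : b k ≤ secondMax hN b := by
    simpa [htop k] using min_le_secondMax hN b hk
  have hqk : q k = 0 := by
    rw [hq, if_neg]
    exact fun hlt => (hlt top hk.symm).not_ge (htop k (Finset.mem_univ k))
  refine le_trans ?_ (Finset.le_sup' (fun i => s i * (1 - q i)) (Finset.mem_univ k))
  rw [hqk, sub_zero, mul_one, hs]
  exact max_le_max_right 0 (by linarith)

open Classical in
/-- With valuations `v₁ > ⋯ > v_N`, distinct bids `b`, allocation
indicators `q` (strictly highest bid) and shading amounts `s_i = (v_i - b_i)₊`,
the drop in the second-highest value satisfies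
`(v⁻ - b⁻)₊ ≤ max_i s_i (1 - q_i)`. -/
theorem second_highest_drop_le_max_shading
    {N : ℕ} (hN : 2 ≤ N) (v b q s : Fin N → ℝ)
    (hv : StrictAnti v) (hb : Function.Injective b)
    (hq : ∀ i, q i = if (∀ j, j ≠ i → b j < b i) then 1 else 0)
    (hs : ∀ i, s i = max (v i - b i) 0) :
    max (secondMax hN v - secondMax hN b) 0 ≤
      Finset.univ.sup' (finUnivNonempty hN) (fun i => s i * (1 - q i)) :=
  second_highest_drop_le_max_shading_general hN v b q s hv hq hs
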